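/- arXiv:2603.17005 — 4 statements merged into one kernel-verified Lean document; each statement's English description precedes it below -/
import Mathlib

section
/- Ordering of minimum type-II errors in the singly minimized setting (Lemma, Appendix B.1): Let A and B be nonempty finite types, ρ_AB a bipartite state on A × B with marginal ρ_A, n a positive natural number, and μ ≥ 0 a real number. Define three quantities, each an infimum over tests T on Fin n → (A × B) satisfying Re Tr[ρ_AB^{⊗n} · (1 − T)] ≤ μ: (1) β̂^iid_n(μ), where the objective is ⨆ over states τ_B on B of Re Tr[(ρ_A^{⊗n} ⊗ τ_B^{⊗n}) · T]; (2) β̂^sym_n(μ), where the objective is ⨆ over permutation-invariant states τ on Fin n → B of Re Tr[(ρ_A^{⊗n} ⊗ τ) · T]; (3) β̂^ind_n(μ), where the objective is ⨆ over all states τ on Fin n → B of Re Tr[(ρ_A^{⊗n} ⊗ τ) · T]. Then 0 ≤ β̂^iid_n(μ) ≤ β̂^sym_n(μ) = β̂^ind_n(μ) ≤ max 0 (1 − μ) ≤ 1. -/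
open scoped BigOperators Kronecker ComplexOrder

noncomputable section

/-- Matrix power on the support via spectral decomposition (convention `0 ^ p = 0`);
junk value `0` for non-Hermitian matrices. -/
noncomputable def mpow {A : Type*} [Fintype A] [DecidableEq A] (X : Matrix A A ℂ) (p : ℝ) :
    Matrix A A ℂ :=
  if h : X.IsHermitian then
    (h.eigenvectorUnitary : Matrix A A ℂ) *
      Matrix.diagonal (fun i =>
        ((if h.eigenvalues i = 0 then (0 : ℝ) else (h.eigenvalues i) ^ p : ℝ) : ℂ)) *
      (star (h.eigenvectorUnitary : Matrix A A ℂ))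
  else 0

/-- Matrix logarithm via spectral decomposition (`Real.log 0 = 0`); junk value `0`
for non-Hermitian matrices. -/
noncomputable def mlog {A : Type*} [Fintype A] [DecidableEq A] (X : Matrix A A ℂ) :
    Matrix A A ℂ :=
  if h : X.IsHermitian then
    (h.eigenvectorUnitary : Matrix A A ℂ) *
      Matrix.diagonal (fun i => ((Real.log (h.eigenvalues i) : ℝ) : ℂ)) *
      (star (h.eigenvectorUnitary : Matrix A A ℂ))
  else 0

/-- A quantum state: a positive semidefinite matrix with unit trace. -/
structure MState (A : Type*) [Fintype A] [DecidableEq A] where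
  mat : Matrix A A ℂ
  posSemidef : mat.PosSemidef
  trace_one : mat.trace = 1

/-- `Q_α(ρ‖σ) = Tr[ρ^α σ^(1-α)]`. -/
noncomputable def QRenyi {A : Type*} [Fintype A] [DecidableEq A] (α : ℝ)
    (ρ σ : Matrix A A ℂ) : ℝ :=
  ((mpow ρ α * mpow σ (1 - α)).trace).re

/-- Petz Rényi divergence `D_α(ρ‖σ)`, valued in `(-∞,∞]`. -/
noncomputable def DRenyi {A : Type*} [Fintype A] [DecidableEq A] (α : ℝ)
    (ρ σ : Matrix A A ℂ) : EReal :=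
  if QRenyi α ρ σ = 0 then ⊤ else (((α - 1)⁻¹ * Real.log (QRenyi α ρ σ) : ℝ) : EReal)

-- Quantum relative entropy `D(ρ‖σ)`, valued in `(-∞,∞]`.
open Classical in
noncomputable def relEnt {A : Type*} [Fintype A] [DecidableEq A] (ρ σ : Matrix A A ℂ) : EReal :=
  if LinearMap.ker (Matrix.toLin' σ) ≤ LinearMap.ker (Matrix.toLin' ρ) then
    (((ρ * (mlog ρ - mlog σ)).trace).re : EReal)
  else ⊤

/-- Doubly minimized Petz Rényi lautum information. -/
noncomputable def Ldd {A B : Type*} [Fintype A] [DecidableEq A] [Fintype B] [DecidableEq B]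
    (α : ℝ) (ρ : Matrix (A × B) (A × B) ℂ) : EReal :=
  ⨅ (σ : MState A) (τ : MState B), DRenyi α (σ.mat ⊗ₖ τ.mat) ρ

/-- Tumula information. -/
noncomputable def Tum {A B : Type*} [Fintype A] [DecidableEq A] [Fintype B] [DecidableEq B]
    (ρ : Matrix (A × B) (A × B) ℂ) : EReal :=
  ⨅ (σ : MState A) (τ : MState B), relEnt (σ.mat ⊗ₖ τ.mat) ρ

/-- Partial trace over the first factor. -/
noncomputable def ptrA {A B : Type*} [Fintype A] (M : Matrix (A × B) (A × B) ℂ) :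
    Matrix B B ℂ :=
  Matrix.of fun b b' => ∑ a, M (a, b) (a, b')

/-- Partial trace over the second factor. -/
noncomputable def ptrB {A B : Type*} [Fintype B] (M : Matrix (A × B) (A × B) ℂ) :
    Matrix A A ℂ :=
  Matrix.of fun a a' => ∑ b, M (a, b) (a', b)


/-- `n`-fold tensor power of a matrix: `M^{⊗n} f g = ∏ i, M (f i) (g i)`. -/
noncomputable def tpow {Z : Type*} (M : Matrix Z Z ℂ) (n : ℕ) :
    Matrix (Fin n → Z) (Fin n → Z) ℂ :=
  Matrix.of fun f g => ∏ i, M (f i) (g i)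

/-- A test: a matrix `T` with `0 ≤ T ≤ 1` in the Loewner order. -/
def IsTest {Z : Type*} [Fintype Z] [DecidableEq Z] (T : Matrix Z Z ℂ) : Prop :=
  T.PosSemidef ∧ ((1 : Matrix Z Z ℂ) - T).PosSemidef

/-- Reindex a matrix on `(Fin n → A) × (Fin n → B)` to a matrix on `Fin n → A × B`
via the natural bijection. -/
noncomputable def prodReindex {A B : Type*} (n : ℕ)
    (M : Matrix ((Fin n → A) × (Fin n → B)) ((Fin n → A) × (Fin n → B)) ℂ) :
    Matrix (Fin n → A × B) (Fin n → A × B) ℂ :=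
  Matrix.reindex (Equiv.arrowProdEquivProdArrow (Fin n) (fun _ => A) (fun _ => B)).symm
    (Equiv.arrowProdEquivProdArrow (Fin n) (fun _ => A) (fun _ => B)).symm M

/-- Tests on `Fin n → A × B` whose type-I error with respect to `ρ^{⊗n}` is at most `μ`. -/
def Feasible {A B : Type*} [Fintype A] [DecidableEq A] [Fintype B] [DecidableEq B]
    (ρ : MState (A × B)) (n : ℕ) (μ : ℝ) : Type _ :=
  {T : Matrix (Fin n → A × B) (Fin n → A × B) ℂ //
    IsTest T ∧ ((tpow ρ.mat n) * (1 - T)).trace.re ≤ μ}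

/-- A matrix on `Fin n → B` is permutation invariant if reindexing rows and columns by
`f ↦ f ∘ π` leaves it unchanged, for every permutation `π` of `Fin n`. -/
def PermInv {n : ℕ} {B : Type*} (τ : Matrix (Fin n → B) (Fin n → B) ℂ) : Prop :=
  ∀ (π : Equiv.Perm (Fin n)) (f g : Fin n → B), τ (f ∘ π) (g ∘ π) = τ f g

/-- Minimum type-II error, i.i.d. alternative hypotheses `{ρ_A^{⊗n} ⊗ τ_B^{⊗n}}`. -/
noncomputable def betaIid {A B : Type*} [Fintype A] [DecidableEq A] [Fintype B]
    [DecidableEq B] (ρ : MState (A × B)) (n : ℕ) (μ : ℝ) : ℝ :=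
  ⨅ T : Feasible ρ n μ, ⨆ τ : MState B,
    ((prodReindex n (tpow (ptrB ρ.mat) n ⊗ₖ tpow τ.mat n)) * T.1).trace.re

/-- Minimum type-II error, permutation-invariant alternative hypotheses. -/
noncomputable def betaSym {A B : Type*} [Fintype A] [DecidableEq A] [Fintype B]
    [DecidableEq B] (ρ : MState (A × B)) (n : ℕ) (μ : ℝ) : ℝ :=
  ⨅ T : Feasible ρ n μ, ⨆ τ : {τ : MState (Fin n → B) // PermInv τ.mat},
    ((prodReindex n (tpow (ptrB ρ.mat) n ⊗ₖ τ.1.mat)) * T.1).trace.re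

/-- Minimum type-II error, arbitrary alternative hypotheses on the `B` systems. -/
noncomputable def betaInd {A B : Type*} [Fintype A] [DecidableEq A] [Fintype B]
    [DecidableEq B] (ρ : MState (A × B)) (n : ℕ) (μ : ℝ) : ℝ :=
  ⨅ T : Feasible ρ n μ, ⨆ τ : MState (Fin n → B),
    ((prodReindex n (tpow (ptrB ρ.mat) n ⊗ₖ τ.mat)) * T.1).trace.re

/-!
The three quantities differ only in the set of alternative states over which the type-II error
of a test is maximised, so `β_iid ≤ β_sym ≤ β_ind` is monotonicity of the supremum. For
`β_ind ≤ β_sym`, average a feasible test `T` over the permutations of the `n` copies: since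
`ρ^{⊗n}` is permutation invariant the average is still feasible, and since `ρ_A^{⊗n}` is too,
`Tr[(ρ_A^{⊗n} ⊗ τ) T̄] = Tr[(ρ_A^{⊗n} ⊗ τ̄) T]` with `τ̄` the permutation-invariant
average of `τ`. The bound `max 0 (1 - μ)` is the type-II error of the feasible test
`max 0 (1 - μ) • 1`.
-/

open Matrix

namespace Matrix

variable {R Z W : Type*} [Fintype Z] [Fintype W]

theorem trace_submatrix_equiv [AddCommMonoid R] (e : W ≃ Z) (M : Matrix Z Z R) :
    (M.submatrix e e).trace = M.trace :=
  Fintype.sum_equiv e _ _ fun _ => rfl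

theorem trace_mul_submatrix_equiv [Semiring R] (e : W ≃ Z) (X : Matrix W W R)
    (T : Matrix Z Z R) : (X * T.submatrix e e).trace = (X.submatrix e.symm e.symm * T).trace := by
  rw [← trace_submatrix_equiv e (X.submatrix e.symm e.symm * T),
    ← submatrix_mul_equiv _ _ e e e, submatrix_submatrix]
  simp

open scoped MatrixOrder in
theorem PosSemidef.trace_mul_nonneg [RCLike R] [DecidableEq Z] {X T : Matrix Z Z R}
    (hX : X.PosSemidef) (hT : T.PosSemidef) : 0 ≤ (X * T).trace := by
  obtain ⟨C, rfl⟩ := CStarAlgebra.nonneg_iff_eq_star_mul_self.mp hT.nonneg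
  rw [← Matrix.mul_assoc, trace_mul_cycle]
  exact (hX.mul_mul_conjTranspose_same C).trace_nonneg

end Matrix

section TensorPower

variable {Z : Type*}

theorem tpow_mul [Fintype Z] (P Q : Matrix Z Z ℂ) (n : ℕ) :
    tpow (P * Q) n = tpow P n * tpow Q n := by
  ext f g
  simp only [tpow, of_apply, mul_apply]
  rw [Fintype.prod_sum fun i k => P (f i) k * Q k (g i)]
  exact Finset.sum_congr rfl fun h _ => Finset.prod_mul_distrib

theorem tpow_conjTranspose (M : Matrix Z Z ℂ) (n : ℕ) : tpow Mᴴ n = (tpow M n)ᴴ := by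
  ext f g
  simp only [tpow, of_apply, conjTranspose_apply, star_prod]

open scoped MatrixOrder in
theorem Matrix.PosSemidef.tpow [Fintype Z] {M : Matrix Z Z ℂ} (hM : M.PosSemidef) (n : ℕ) :
    (tpow M n).PosSemidef := by
  classical
  obtain ⟨C, rfl⟩ := CStarAlgebra.nonneg_iff_eq_star_mul_self.mp hM.nonneg
  rw [star_eq_conjTranspose, tpow_mul, tpow_conjTranspose]
  exact posSemidef_conjTranspose_mul_self _

theorem trace_tpow [Fintype Z] (M : Matrix Z Z ℂ) (n : ℕ) : (tpow M n).trace = M.trace ^ n := by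
  simp only [trace, diag, tpow, of_apply]
  rw [← Fintype.prod_sum fun (_ : Fin n) k => M k k, Finset.prod_const, Finset.card_univ,
    Fintype.card_fin]

theorem permInv_tpow (M : Matrix Z Z ℂ) (n : ℕ) : PermInv (tpow M n) := fun π f g =>
  Equiv.prod_comp π fun i => M (f i) (g i)

end TensorPower

section PartialTrace

variable {A B : Type*} [Fintype B]

theorem ptrB_eq_sum_submatrix (M : Matrix (A × B) (A × B) ℂ) :
    ptrB M = ∑ b, M.submatrix (·, b) (·, b) := by
  ext a a'
  simp [ptrB, Matrix.sum_apply]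

theorem Matrix.PosSemidef.ptrB {M : Matrix (A × B) (A × B) ℂ} (hM : M.PosSemidef) :
    (_root_.ptrB M).PosSemidef := by
  rw [ptrB_eq_sum_submatrix]
  exact posSemidef_sum _ fun b _ => hM.submatrix _

theorem trace_ptrB [Fintype A] (M : Matrix (A × B) (A × B) ℂ) : (ptrB M).trace = M.trace := by
  simp only [trace, diag, ptrB, of_apply, Fintype.sum_prod_type]

end PartialTrace

namespace MState

variable {Z W : Type*} [Fintype Z] [DecidableEq Z] [Fintype W] [DecidableEq W]

def tpow (σ : MState Z) (n : ℕ) : MState (Fin n → Z) where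
  mat := _root_.tpow σ.mat n
  posSemidef := σ.posSemidef.tpow n
  trace_one := by rw [trace_tpow, σ.trace_one, one_pow]

def ptrB (ρ : MState (Z × W)) : MState Z where
  mat := _root_.ptrB ρ.mat
  posSemidef := ρ.posSemidef.ptrB
  trace_one := by rw [trace_ptrB, ρ.trace_one]

def kron (σ : MState Z) (τ : MState W) : MState (Z × W) where
  mat := σ.mat ⊗ₖ τ.mat
  posSemidef := σ.posSemidef.kronecker τ.posSemidef
  trace_one := by rw [trace_kronecker, σ.trace_one, τ.trace_one, one_mul]

def reindex (e : Z ≃ W) (σ : MState Z) : MState W where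
  mat := Matrix.reindex e e σ.mat
  posSemidef := σ.posSemidef.submatrix _
  trace_one := by rw [reindex_apply, trace_submatrix_equiv, σ.trace_one]

theorem re_trace_mul_mem_Icc (σ : MState Z) {T : Matrix Z Z ℂ} (hT : IsTest T) :
    (σ.mat * T).trace.re ∈ Set.Icc 0 1 := by
  have h0 := σ.posSemidef.trace_mul_nonneg hT.1
  have h1 := σ.posSemidef.trace_mul_nonneg hT.2
  rw [Matrix.mul_sub, Matrix.mul_one, trace_sub, σ.trace_one, sub_nonneg] at h1
  exact ⟨(Complex.le_def.mp h0).1, by simpa using (Complex.le_def.mp h1).1⟩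

theorem re_trace_mul_smul_one (σ : MState Z) (d : ℝ) :
    (σ.mat * ((d : ℂ) • 1)).trace.re = d := by
  rw [mul_smul_comm, Matrix.mul_one, trace_smul, σ.trace_one, smul_eq_mul, mul_one,
    Complex.ofReal_re]

end MState

theorem isTest_smul_one {Z : Type*} [Fintype Z] [DecidableEq Z] {d : ℝ} (h0 : 0 ≤ d)
    (h1 : d ≤ 1) : IsTest ((d : ℂ) • (1 : Matrix Z Z ℂ)) := by
  have hsub : (1 : Matrix Z Z ℂ) - (d : ℂ) • 1 = ((1 - d : ℝ) : ℂ) • 1 := by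
    rw [Complex.ofReal_sub, Complex.ofReal_one, sub_smul, one_smul]
  refine ⟨PosSemidef.one.smul (Complex.zero_le_real.mpr h0), ?_⟩
  rw [hsub]
  exact PosSemidef.one.smul (Complex.zero_le_real.mpr (sub_nonneg.mpr h1))

section Symmetrize

variable {Z : Type*} {n : ℕ}

def precompPerm (π : Equiv.Perm (Fin n)) : (Fin n → Z) ≃ (Fin n → Z) :=
  Equiv.arrowCongr π.symm (Equiv.refl Z)

theorem precompPerm_apply (π : Equiv.Perm (Fin n)) (f : Fin n → Z) :
    precompPerm π f = f ∘ π := rfl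

theorem precompPerm_symm (π : Equiv.Perm (Fin n)) :
    (precompPerm (Z := Z) π).symm = precompPerm π⁻¹ := rfl

theorem PermInv.submatrix_precompPerm {M : Matrix (Fin n → Z) (Fin n → Z) ℂ} (h : PermInv M)
    (π : Equiv.Perm (Fin n)) : M.submatrix (precompPerm π) (precompPerm π) = M := by
  ext f g
  exact h π f g

theorem permInv_one [DecidableEq Z] : PermInv (1 : Matrix (Fin n → Z) (Fin n → Z) ℂ) :=
  fun π f g => congrFun (congrFun (submatrix_one_equiv (precompPerm π)) f) g

def symmetrize (M : Matrix (Fin n → Z) (Fin n → Z) ℂ) :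
    Matrix (Fin n → Z) (Fin n → Z) ℂ :=
  (Fintype.card (Equiv.Perm (Fin n)) : ℝ)⁻¹ •
    ∑ π : Equiv.Perm (Fin n), M.submatrix (precompPerm π) (precompPerm π)

theorem symmetrize_of_permInv {M : Matrix (Fin n → Z) (Fin n → Z) ℂ} (h : PermInv M) :
    symmetrize M = M := by
  rw [symmetrize]
  simp only [h.submatrix_precompPerm, Finset.sum_const, Finset.card_univ,
    ← Nat.cast_smul_eq_nsmul ℝ, smul_smul]
  rw [inv_mul_cancel₀ (Nat.cast_ne_zero.mpr Fintype.card_ne_zero), one_smul]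

theorem permInv_symmetrize (M : Matrix (Fin n → Z) (Fin n → Z) ℂ) :
    PermInv (symmetrize M) := by
  intro π₀ f g
  simp only [symmetrize, Matrix.smul_apply, Matrix.sum_apply, submatrix_apply, precompPerm_apply]
  congr 1
  exact Fintype.sum_equiv (Equiv.mulLeft π₀) _ _ fun π => rfl

theorem symmetrize_sub (M N : Matrix (Fin n → Z) (Fin n → Z) ℂ) :
    symmetrize (M - N) = symmetrize M - symmetrize N := by
  simp only [symmetrize, submatrix_sub, Pi.sub_apply, Finset.sum_sub_distrib, smul_sub]

theorem Matrix.PosSemidef.symmetrize {M : Matrix (Fin n → Z) (Fin n → Z) ℂ}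
    (hM : M.PosSemidef) : (_root_.symmetrize M).PosSemidef :=
  (posSemidef_sum _ fun π _ => hM.submatrix _).smul (by positivity)

theorem symmetrize_prodReindex_kronecker {A B : Type*} {σ : Matrix (Fin n → A) (Fin n → A) ℂ}
    (hσ : PermInv σ) (τ : Matrix (Fin n → B) (Fin n → B) ℂ) :
    symmetrize (prodReindex n (σ ⊗ₖ τ)) = prodReindex n (σ ⊗ₖ symmetrize τ) := by
  ext f g
  simp only [symmetrize, prodReindex, reindex_apply, Matrix.smul_apply, Matrix.sum_apply,
    submatrix_apply, kroneckerMap_apply, precompPerm_apply, Equiv.symm_symm, mul_smul_comm,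
    Finset.mul_sum]
  congr 1
  refine Finset.sum_congr rfl fun π _ => congrArg (· * _) ?_
  exact hσ π (fun i => (f i).1) (fun i => (g i).1)

theorem one_sub_symmetrize [DecidableEq Z] (T : Matrix (Fin n → Z) (Fin n → Z) ℂ) :
    1 - symmetrize T = symmetrize (1 - T) := by
  rw [symmetrize_sub, symmetrize_of_permInv permInv_one]

variable [Fintype Z]

theorem trace_symmetrize (M : Matrix (Fin n → Z) (Fin n → Z) ℂ) :
    (symmetrize M).trace = M.trace := by
  simp only [symmetrize, trace_smul, trace_sum, trace_submatrix_equiv, Finset.sum_const,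
    Finset.card_univ, ← Nat.cast_smul_eq_nsmul ℝ, smul_smul]
  rw [inv_mul_cancel₀ (Nat.cast_ne_zero.mpr Fintype.card_ne_zero), one_smul]

theorem trace_mul_symmetrize (X T : Matrix (Fin n → Z) (Fin n → Z) ℂ) :
    (X * symmetrize T).trace = (symmetrize X * T).trace := by
  simp only [symmetrize, mul_smul_comm, smul_mul_assoc, Finset.mul_sum, Finset.sum_mul,
    trace_smul, trace_sum, trace_mul_submatrix_equiv, precompPerm_symm]
  congr 1
  exact Fintype.sum_equiv (Equiv.inv _) _ _ fun π => rfl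

theorem IsTest.symmetrize [DecidableEq Z] {T : Matrix (Fin n → Z) (Fin n → Z) ℂ}
    (hT : IsTest T) : IsTest (_root_.symmetrize T) :=
  ⟨hT.1.symmetrize, one_sub_symmetrize T ▸ hT.2.symmetrize⟩

def MState.symmetrize [DecidableEq Z] (τ : MState (Fin n → Z)) : MState (Fin n → Z) where
  mat := _root_.symmetrize τ.mat
  posSemidef := τ.posSemidef.symmetrize
  trace_one := by rw [trace_symmetrize, τ.trace_one]

end Symmetrize

section TypeIIError

variable {A B : Type*} [Fintype A] [DecidableEq A] [Fintype B] [DecidableEq B] {n : ℕ} {μ : ℝ}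

def typeIIError (ρ : MState (A × B)) (n : ℕ) (τ : MState (Fin n → B))
    (T : Matrix (Fin n → A × B) (Fin n → A × B) ℂ) : ℝ :=
  (prodReindex n (tpow (ptrB ρ.mat) n ⊗ₖ τ.mat) * T).trace.re

theorem typeIIError_mem_Icc (ρ : MState (A × B)) (τ : MState (Fin n → B))
    {T : Matrix (Fin n → A × B) (Fin n → A × B) ℂ} (hT : IsTest T) :
    typeIIError ρ n τ T ∈ Set.Icc 0 1 :=
  (((ρ.ptrB.tpow n).kron τ).reindex _).re_trace_mul_mem_Icc hT

theorem typeIIError_smul_one (ρ : MState (A × B)) (τ : MState (Fin n → B)) (d : ℝ) :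
    typeIIError ρ n τ ((d : ℂ) • 1) = d :=
  (((ρ.ptrB.tpow n).kron τ).reindex _).re_trace_mul_smul_one d

theorem typeIIError_symmetrize (ρ : MState (A × B)) (τ : MState (Fin n → B))
    (T : Matrix (Fin n → A × B) (Fin n → A × B) ℂ) :
    typeIIError ρ n τ (symmetrize T) = typeIIError ρ n τ.symmetrize T := by
  rw [typeIIError, trace_mul_symmetrize, symmetrize_prodReindex_kronecker (permInv_tpow _ n)]
  rfl

def Feasible.symmetrize {ρ : MState (A × B)} (T : Feasible ρ n μ) : Feasible ρ n μ :=
  ⟨_root_.symmetrize T.1, T.2.1.symmetrize, by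
    rw [one_sub_symmetrize, trace_mul_symmetrize, symmetrize_of_permInv (permInv_tpow _ n)]
    exact T.2.2⟩

def Feasible.smulOne (ρ : MState (A × B)) (n : ℕ) (hμ : 0 ≤ μ) : Feasible ρ n μ :=
  ⟨((max 0 (1 - μ) : ℝ) : ℂ) • 1,
    isTest_smul_one (le_max_left _ _) (max_le zero_le_one (by linarith)), by
    have htrace : (tpow ρ.mat n).trace = 1 := (ρ.tpow n).trace_one
    have hvalue :
        (tpow ρ.mat n * ((max 0 (1 - μ) : ℝ) : ℂ) • 1).trace.re = max 0 (1 - μ) :=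
      (ρ.tpow n).re_trace_mul_smul_one _
    rw [Matrix.mul_sub, trace_sub, Matrix.mul_one, htrace, Complex.sub_re, Complex.one_re, hvalue]
    linarith [le_max_right 0 (1 - μ)]⟩

def minTypeIIError (ρ : MState (A × B)) (n : ℕ) (μ : ℝ) {ι : Type*}
    (τ : ι → MState (Fin n → B)) : ℝ :=
  ⨅ T : Feasible ρ n μ, ⨆ i, typeIIError ρ n (τ i) T.1

variable {ρ : MState (A × B)} {ι κ : Type*}

theorem iSup_typeIIError_mem_Icc (τ : ι → MState (Fin n → B))
    {T : Matrix (Fin n → A × B) (Fin n → A × B) ℂ} (hT : IsTest T) :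
    ⨆ i, typeIIError ρ n (τ i) T ∈ Set.Icc 0 1 :=
  ⟨Real.iSup_nonneg fun i => (typeIIError_mem_Icc ρ (τ i) hT).1,
    Real.iSup_le (fun i => (typeIIError_mem_Icc ρ (τ i) hT).2) zero_le_one⟩

theorem bddAbove_range_typeIIError (τ : ι → MState (Fin n → B))
    {T : Matrix (Fin n → A × B) (Fin n → A × B) ℂ} (hT : IsTest T) :
    BddAbove (Set.range fun i => typeIIError ρ n (τ i) T) :=
  ⟨1, Set.forall_mem_range.2 fun i => (typeIIError_mem_Icc ρ (τ i) hT).2⟩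

theorem bddBelow_range_iSup_typeIIError (τ : ι → MState (Fin n → B)) :
    BddBelow (Set.range fun T : Feasible ρ n μ => ⨆ i, typeIIError ρ n (τ i) T.1) :=
  ⟨0, Set.forall_mem_range.2 fun T => (iSup_typeIIError_mem_Icc τ T.2.1).1⟩

theorem minTypeIIError_nonneg (τ : ι → MState (Fin n → B)) :
    0 ≤ minTypeIIError ρ n μ τ :=
  Real.iInf_nonneg fun T => (iSup_typeIIError_mem_Icc τ T.2.1).1

theorem minTypeIIError_mono {τ : ι → MState (Fin n → B)} {τ' : κ → MState (Fin n → B)}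
    (h : ∀ i, ∃ j, τ' j = τ i) :
    minTypeIIError ρ n μ τ ≤ minTypeIIError ρ n μ τ' := by
  refine ciInf_mono (bddBelow_range_iSup_typeIIError τ) fun T => Real.iSup_le (fun i => ?_)
    (iSup_typeIIError_mem_Icc τ' T.2.1).1
  obtain ⟨j, hj⟩ := h i
  exact hj ▸ le_ciSup (bddAbove_range_typeIIError τ' T.2.1) j

theorem minTypeIIError_le_max (hμ : 0 ≤ μ) (τ : ι → MState (Fin n → B)) :
    minTypeIIError ρ n μ τ ≤ max 0 (1 - μ) :=
  (ciInf_le (bddBelow_range_iSup_typeIIError τ) (Feasible.smulOne ρ n hμ)).trans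
    (Real.iSup_le (fun i => (typeIIError_smul_one ρ (τ i) _).le) (le_max_left _ _))

theorem minTypeIIError_le_minTypeIIError_permInv (hμ : 0 ≤ μ) :
    minTypeIIError ρ n μ (fun τ : MState (Fin n → B) => τ) ≤
      minTypeIIError ρ n μ (fun τ : {τ : MState (Fin n → B) // PermInv τ.mat} => τ.1) := by
  have : Nonempty (Feasible ρ n μ) := ⟨Feasible.smulOne ρ n hμ⟩
  refine le_ciInf fun T => (ciInf_le (bddBelow_range_iSup_typeIIError _) T.symmetrize).trans
    (Real.iSup_le (fun τ => ?_) (iSup_typeIIError_mem_Icc _ T.2.1).1)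
  rw [Feasible.symmetrize, typeIIError_symmetrize]
  have hbdd := bddAbove_range_typeIIError (ρ := ρ)
    (fun τ : {τ : MState (Fin n → B) // PermInv τ.mat} => τ.1) T.2.1
  exact le_ciSup hbdd ⟨τ.symmetrize, permInv_symmetrize _⟩

theorem betaIid_eq_minTypeIIError (ρ : MState (A × B)) (n : ℕ) (μ : ℝ) :
    betaIid ρ n μ = minTypeIIError ρ n μ fun τ : MState B => τ.tpow n := rfl

theorem betaSym_eq_minTypeIIError (ρ : MState (A × B)) (n : ℕ) (μ : ℝ) :
    betaSym ρ n μ = minTypeIIError ρ n μ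
      fun τ : {τ : MState (Fin n → B) // PermInv τ.mat} => τ.1 := rfl

theorem betaInd_eq_minTypeIIError (ρ : MState (A × B)) (n : ℕ) (μ : ℝ) :
    betaInd ρ n μ = minTypeIIError ρ n μ fun τ : MState (Fin n → B) => τ := rfl

end TypeIIError

theorem beta_ordering_general {A B : Type*} [Fintype A] [DecidableEq A]
    [Fintype B] [DecidableEq B]
    (ρ : MState (A × B)) (n : ℕ) (μ : ℝ) (hμ : 0 ≤ μ) :
    0 ≤ betaIid ρ n μ ∧ betaIid ρ n μ ≤ betaSym ρ n μ ∧
      betaSym ρ n μ = betaInd ρ n μ ∧ betaInd ρ n μ ≤ max 0 (1 - μ) ∧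
      max 0 (1 - μ) ≤ (1 : ℝ) := by
  rw [betaIid_eq_minTypeIIError, betaSym_eq_minTypeIIError, betaInd_eq_minTypeIIError]
  exact ⟨minTypeIIError_nonneg _,
    minTypeIIError_mono fun τ => ⟨⟨τ.tpow n, permInv_tpow τ.mat n⟩, rfl⟩,
    le_antisymm (minTypeIIError_mono fun τ => ⟨τ.1, rfl⟩)
      (minTypeIIError_le_minTypeIIError_permInv hμ),
    minTypeIIError_le_max hμ _, max_le zero_le_one (by linarith)⟩

/-- Ordering of minimum type-II errors in the singly minimized setting
(Lemma, Appendix B.1). -/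
theorem beta_ordering {A B : Type*} [Fintype A] [DecidableEq A] [Nonempty A]
    [Fintype B] [DecidableEq B] [Nonempty B]
    (ρ : MState (A × B)) (n : ℕ) (hn : 0 < n) (μ : ℝ) (hμ : 0 ≤ μ) :
    0 ≤ betaIid ρ n μ ∧ betaIid ρ n μ ≤ betaSym ρ n μ ∧
      betaSym ρ n μ = betaInd ρ n μ ∧ betaInd ρ n μ ≤ max 0 (1 - μ) ∧
      max 0 (1 - μ) ≤ (1 : ℝ) :=
  beta_ordering_general ρ n μ hμ

end
end

section
/- Super-additivity of the classical channel tumula information (Proposition 10): Let X₁, Y₁, X₂, Y₂ be nonempty finite types, W₁ a classical channel from X₁ to Y₁, and W₂ a classical channel from X₂ to Y₂. Define the product channel W₁ × W₂ from X₁ × X₂ to Y₁ × Y₂ by (W₁ × W₂) (x₁,x₂) (y₁,y₂) := W₁ x₁ y₁ · W₂ x₂ y₂. Then T(W₁ × W₂) ≥ T(W₁) + T(W₂). -/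
open scoped BigOperators

noncomputable section

/-- A probability distribution on a finite type. -/
structure PDist (X : Type*) [Fintype X] where
  prob : X → ℝ
  nonneg : ∀ x, 0 ≤ prob x
  sum_one : ∑ x, prob x = 1

-- Classical relative entropy (Kullback–Leibler divergence), valued in `(-∞,∞]`.
open Classical in
noncomputable def cDKL {X : Type*} [Fintype X] (P Q : X → ℝ) : EReal :=
  if ∀ x, Q x = 0 → P x = 0 then
    ((∑ x, if P x = 0 then (0 : ℝ) else P x * Real.log (P x / Q x) : ℝ) : EReal)
  else ⊤

/-- Classical tumula information of a joint probability mass function on `X × Y`. -/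
noncomputable def cT {X Y : Type*} [Fintype X] [Fintype Y] (P : X × Y → ℝ) : EReal :=
  ⨅ (Q : PDist X) (R : PDist Y), cDKL (fun p => Q.prob p.1 * R.prob p.2) P

/-- A classical channel from `X` to `Y`. -/
structure Channel (X Y : Type*) [Fintype X] [Fintype Y] where
  prob : X → Y → ℝ
  nonneg : ∀ x y, 0 ≤ prob x y
  sum_one : ∀ x, ∑ y, prob x y = 1

/-- Classical channel tumula information. -/
noncomputable def chT {X Y : Type*} [Fintype X] [Fintype Y] (W : Channel X Y) : EReal :=
  ⨆ P : PDist X, cT (fun p => P.prob p.1 * W.prob p.1 p.2)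

/-- Gibbs' inequality, pointwise form. -/
lemma gibbs_term {m n : ℝ} (hm : 0 ≤ m) (hn : 0 ≤ n) (h : n = 0 → m = 0) :
    m - n ≤ (if m = 0 then (0:ℝ) else m * Real.log (m / n)) := by
  rcases eq_or_lt_of_le hm with hm0 | hm0
  · simp [← hm0]; linarith
  · have hn0 : 0 < n := lt_of_le_of_ne hn (fun h' => by simp [h h'.symm] at hm0)
    rw [if_neg (ne_of_gt hm0)]
    have := Real.log_le_sub_one_of_pos (x := n / m) (div_pos hn0 hm0)
    rw [Real.log_div (ne_of_gt hn0) (ne_of_gt hm0)] at this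
    rw [Real.log_div (ne_of_gt hm0) (ne_of_gt hn0)]
    have h2 : Real.log m - Real.log n ≥ 1 - n / m := by linarith
    calc m - n = m * (1 - n / m) := by field_simp
    _ ≤ m * (Real.log m - Real.log n) := by
        exact mul_le_mul_of_nonneg_left h2 hm

/-- Gibbs' inequality. -/
lemma gibbs {Z : Type*} [Fintype Z] (μ ν : Z → ℝ) (hμ0 : ∀ z, 0 ≤ μ z)
    (hν0 : ∀ z, 0 ≤ ν z) (hμ1 : ∑ z, μ z = 1) (hν1 : ∑ z, ν z ≤ 1)
    (h : ∀ z, ν z = 0 → μ z = 0) :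
    0 ≤ ∑ z, if μ z = 0 then (0:ℝ) else μ z * Real.log (μ z / ν z) := by
  have : ∑ z, (μ z - ν z) ≤ ∑ z, if μ z = 0 then (0:ℝ) else μ z * Real.log (μ z / ν z) :=
    Finset.sum_le_sum fun z _ => gibbs_term (hμ0 z) (hν0 z) (h z)
  rw [Finset.sum_sub_distrib, hμ1] at this
  linarith

lemma real_superadd {Z₁ Z₂ : Type*} [Fintype Z₁] [Fintype Z₂]
    (μ : Z₁ × Z₂ → ℝ) (A : Z₁ → ℝ) (B : Z₂ → ℝ)
    (hμ0 : ∀ z, 0 ≤ μ z) (hμ1 : ∑ z, μ z = 1)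
    (hsupp : ∀ z, A z.1 * B z.2 = 0 → μ z = 0) :
    (∑ z₁, if (∑ z₂, μ (z₁, z₂)) = 0 then (0:ℝ)
      else (∑ z₂, μ (z₁, z₂)) * Real.log ((∑ z₂, μ (z₁, z₂)) / A z₁))
    + (∑ z₂, if (∑ z₁, μ (z₁, z₂)) = 0 then (0:ℝ)
      else (∑ z₁, μ (z₁, z₂)) * Real.log ((∑ z₁, μ (z₁, z₂)) / B z₂))
    ≤ ∑ z, if μ z = 0 then (0:ℝ) else μ z * Real.log (μ z / (A z.1 * B z.2)) := by
  set μ₁ : Z₁ → ℝ := fun z₁ => ∑ z₂, μ (z₁, z₂) with hμ₁def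
  set μ₂ : Z₂ → ℝ := fun z₂ => ∑ z₁, μ (z₁, z₂) with hμ₂def
  have hμ₁0 : ∀ z₁, 0 ≤ μ₁ z₁ := fun z₁ => Finset.sum_nonneg fun z₂ _ => hμ0 _
  have hμ₂0 : ∀ z₂, 0 ≤ μ₂ z₂ := fun z₂ => Finset.sum_nonneg fun z₁ _ => hμ0 _
  have hle₁ : ∀ z : Z₁ × Z₂, μ z ≤ μ₁ z.1 := by
    intro z
    exact Finset.single_le_sum (f := fun z₂ => μ (z.1, z₂)) (fun i _ => hμ0 _)
      (Finset.mem_univ z.2)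
  have hle₂ : ∀ z : Z₁ × Z₂, μ z ≤ μ₂ z.2 := by
    intro z
    exact Finset.single_le_sum (f := fun z₁ => μ (z₁, z.2)) (fun i _ => hμ0 _)
      (Finset.mem_univ z.1)
  have hμ₁1 : ∑ z₁, μ₁ z₁ = 1 := by rw [← hμ1, Fintype.sum_prod_type]
  have hμ₂1 : ∑ z₂, μ₂ z₂ = 1 := by rw [← hμ1, Fintype.sum_prod_type_right]
  have hsupp₁ : ∀ z₁, A z₁ = 0 → μ₁ z₁ = 0 := by
    intro z₁ hA
    exact Finset.sum_eq_zero fun z₂ _ => hsupp (z₁, z₂) (by simp [hA])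
  have hsupp₂ : ∀ z₂, B z₂ = 0 → μ₂ z₂ = 0 := by
    intro z₂ hB
    exact Finset.sum_eq_zero fun z₁ _ => hsupp (z₁, z₂) (by simp [hB])
  set g₁ : Z₁ → ℝ := fun z₁ => if μ₁ z₁ = 0 then 0 else Real.log (μ₁ z₁ / A z₁) with hg₁
  set g₂ : Z₂ → ℝ := fun z₂ => if μ₂ z₂ = 0 then 0 else Real.log (μ₂ z₂ / B z₂) with hg₂
  -- termwise decomposition
  have hdecomp : ∀ z : Z₁ × Z₂,
      (if μ z = 0 then (0:ℝ) else μ z * Real.log (μ z / (A z.1 * B z.2)))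
      = (if μ z = 0 then (0:ℝ) else μ z * Real.log (μ z / (μ₁ z.1 * μ₂ z.2)))
        + μ z * g₁ z.1 + μ z * g₂ z.2 := by
    intro z
    by_cases hz : μ z = 0
    · simp [hz]
    · have hμpos : 0 < μ z := lt_of_le_of_ne (hμ0 z) (Ne.symm hz)
      have h1 : 0 < μ₁ z.1 := lt_of_lt_of_le hμpos (hle₁ z)
      have h2 : 0 < μ₂ z.2 := lt_of_lt_of_le hμpos (hle₂ z)
      have hA : A z.1 ≠ 0 := fun h => h1.ne' (hsupp₁ z.1 h)
      have hB : B z.2 ≠ 0 := fun h => h2.ne' (hsupp₂ z.2 h)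
      rw [if_neg hz, if_neg hz, hg₁, hg₂]
      simp only [if_neg h1.ne', if_neg h2.ne']
      rw [Real.log_div hz (mul_ne_zero hA hB), Real.log_mul hA hB,
        Real.log_div hz (mul_ne_zero h1.ne' h2.ne'), Real.log_mul h1.ne' h2.ne',
        Real.log_div h1.ne' hA, Real.log_div h2.ne' hB]
      ring
  rw [Finset.sum_congr rfl (fun z _ => hdecomp z)]
  rw [Finset.sum_add_distrib, Finset.sum_add_distrib]
  have hS₁ : ∑ z : Z₁ × Z₂, μ z * g₁ z.1
      = ∑ z₁, if μ₁ z₁ = 0 then (0:ℝ) else μ₁ z₁ * Real.log (μ₁ z₁ / A z₁) := by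
    rw [Fintype.sum_prod_type]
    refine Finset.sum_congr rfl fun z₁ _ => ?_
    rw [show (∑ y, μ (z₁, y) * g₁ (z₁, y).1) = (∑ y, μ (z₁, y)) * g₁ z₁ from by
      rw [Finset.sum_mul]]
    by_cases h : μ₁ z₁ = 0
    · simp [hg₁, h, hμ₁def]
    · simp [hg₁, h, hμ₁def]
  have hS₂ : ∑ z : Z₁ × Z₂, μ z * g₂ z.2
      = ∑ z₂, if μ₂ z₂ = 0 then (0:ℝ) else μ₂ z₂ * Real.log (μ₂ z₂ / B z₂) := by
    rw [Fintype.sum_prod_type_right]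
    refine Finset.sum_congr rfl fun z₂ _ => ?_
    rw [show (∑ x, μ (x, z₂) * g₂ (x, z₂).2) = (∑ x, μ (x, z₂)) * g₂ z₂ from by
      rw [Finset.sum_mul]]
    by_cases h : μ₂ z₂ = 0
    · simp [hg₂, h, hμ₂def]
    · simp [hg₂, h, hμ₂def]
  have hI : 0 ≤ ∑ z : Z₁ × Z₂, if μ z = 0 then (0:ℝ)
      else μ z * Real.log (μ z / (μ₁ z.1 * μ₂ z.2)) := by
    refine gibbs μ (fun z => μ₁ z.1 * μ₂ z.2) hμ0
      (fun z => mul_nonneg (hμ₁0 _) (hμ₂0 _)) hμ1 ?_ ?_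
    · rw [Fintype.sum_prod_type]
      simp_rw [← Finset.mul_sum]
      rw [← Finset.sum_mul, hμ₁1, hμ₂1, one_mul]
    · intro z hz
      rcases mul_eq_zero.1 hz with h | h
      · exact le_antisymm (h ▸ hle₁ z) (hμ0 z)
      · exact le_antisymm (h ▸ hle₂ z) (hμ0 z)
  rw [hS₁, hS₂]
  linarith

lemma cDKL_superadd {Z₁ Z₂ : Type*} [Fintype Z₁] [Fintype Z₂]
    (μ : Z₁ × Z₂ → ℝ) (A : Z₁ → ℝ) (B : Z₂ → ℝ)
    (hμ0 : ∀ z, 0 ≤ μ z) (hμ1 : ∑ z, μ z = 1) :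
    cDKL (fun z₁ => ∑ z₂, μ (z₁, z₂)) A + cDKL (fun z₂ => ∑ z₁, μ (z₁, z₂)) B
      ≤ cDKL μ (fun z => A z.1 * B z.2) := by
  classical
  by_cases hsupp : ∀ z : Z₁ × Z₂, A z.1 * B z.2 = 0 → μ z = 0
  · have hsupp₁ : ∀ z₁, A z₁ = 0 → (∑ z₂, μ (z₁, z₂)) = 0 := fun z₁ hA =>
      Finset.sum_eq_zero fun z₂ _ => hsupp (z₁, z₂) (by simp [hA])
    have hsupp₂ : ∀ z₂, B z₂ = 0 → (∑ z₁, μ (z₁, z₂)) = 0 := fun z₂ hB =>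
      Finset.sum_eq_zero fun z₁ _ => hsupp (z₁, z₂) (by simp [hB])
    rw [cDKL, cDKL, cDKL, if_pos hsupp₁, if_pos hsupp₂, if_pos hsupp]
    rw [← EReal.coe_add, EReal.coe_le_coe_iff]
    exact real_superadd μ A B hμ0 hμ1 hsupp
  · rw [show cDKL μ (fun z => A z.1 * B z.2) = ⊤ from by rw [cDKL, if_neg hsupp]]
    exact le_top

lemma cDKL_comp_equiv {Z Z' : Type*} [Fintype Z] [Fintype Z'] (e : Z ≃ Z')
    (P Q : Z' → ℝ) : cDKL (fun z => P (e z)) (fun z => Q (e z)) = cDKL P Q := by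
  classical
  rw [cDKL, cDKL]
  have h1 : (∀ z, Q (e z) = 0 → P (e z) = 0) ↔ (∀ z', Q z' = 0 → P z' = 0) :=
    e.forall_congr (by simp)
  by_cases h : ∀ z', Q z' = 0 → P z' = 0
  · rw [if_pos (h1.2 h), if_pos h]
    congr 1
    exact Fintype.sum_equiv e _ _ (fun z => rfl)
  · rw [if_neg (fun hz => h (h1.1 hz)), if_neg h]

def PDist.fstM {X Y : Type*} [Fintype X] [Fintype Y] (Q : PDist (X × Y)) : PDist X where
  prob := fun x => ∑ y, Q.prob (x, y)
  nonneg := fun x => Finset.sum_nonneg fun y _ => Q.nonneg _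
  sum_one := by rw [← Q.sum_one, Fintype.sum_prod_type]

def PDist.sndM {X Y : Type*} [Fintype X] [Fintype Y] (Q : PDist (X × Y)) : PDist Y where
  prob := fun y => ∑ x, Q.prob (x, y)
  nonneg := fun y => Finset.sum_nonneg fun x _ => Q.nonneg _
  sum_one := by rw [← Q.sum_one, Fintype.sum_prod_type_right]


/-- Super-additivity of the classical channel tumula information (Proposition 10). -/
theorem channel_tumula_superadditive {X₁ Y₁ X₂ Y₂ : Type*}
    [Fintype X₁] [Nonempty X₁] [Fintype Y₁] [Nonempty Y₁]
    [Fintype X₂] [Nonempty X₂] [Fintype Y₂] [Nonempty Y₂]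
    (W₁ : Channel X₁ Y₁) (W₂ : Channel X₂ Y₂)
    (W : Channel (X₁ × X₂) (Y₁ × Y₂))
    (hW : ∀ x₁ x₂ y₁ y₂, W.prob (x₁, x₂) (y₁, y₂) = W₁.prob x₁ y₁ * W₂.prob x₂ y₂) :
    chT W₁ + chT W₂ ≤ chT W := by
  refine EReal.add_le_of_forall_lt fun a ha b hb => ?_
  rw [chT, lt_iSup_iff] at ha hb
  obtain ⟨P₁, hP₁⟩ := ha
  obtain ⟨P₂, hP₂⟩ := hb
  refine le_trans (add_le_add hP₁.le hP₂.le) ?_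
  have hPsum : ∑ p : X₁ × X₂, P₁.prob p.1 * P₂.prob p.2 = 1 := by
    rw [Fintype.sum_prod_type]
    simp_rw [← Finset.mul_sum]
    rw [← Finset.sum_mul, P₁.sum_one, P₂.sum_one, one_mul]
  set P : PDist (X₁ × X₂) := ⟨fun p => P₁.prob p.1 * P₂.prob p.2,
    fun p => mul_nonneg (P₁.nonneg _) (P₂.nonneg _), hPsum⟩ with hP
  refine le_trans ?_
    (le_iSup (fun P : PDist (X₁ × X₂) => cT fun p => P.prob p.1 * W.prob p.1 p.2) P)
  rw [cT]
  refine le_iInf fun Q => le_iInf fun R => ?_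
  set A : X₁ × Y₁ → ℝ := fun q => P₁.prob q.1 * W₁.prob q.1 q.2 with hA
  set B : X₂ × Y₂ → ℝ := fun q => P₂.prob q.1 * W₂.prob q.1 q.2 with hB
  set μ' : (X₁ × Y₁) × (X₂ × Y₂) → ℝ :=
    fun z => Q.prob (z.1.1, z.2.1) * R.prob (z.1.2, z.2.2) with hμ'
  have hμ'0 : ∀ z, 0 ≤ μ' z := fun z => mul_nonneg (Q.nonneg _) (R.nonneg _)
  have h2 : ∑ p : (X₁ × X₂) × (Y₁ × Y₂), Q.prob p.1 * R.prob p.2 = 1 := by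
    rw [Fintype.sum_prod_type]
    simp_rw [← Finset.mul_sum]
    rw [← Finset.sum_mul, Q.sum_one, R.sum_one, one_mul]
  have hμ'1 : ∑ z, μ' z = 1 := by
    rw [← h2]
    exact Equiv.sum_comp (Equiv.prodProdProdComm X₁ Y₁ X₂ Y₂)
      (fun p : (X₁ × X₂) × (Y₁ × Y₂) => Q.prob p.1 * R.prob p.2)
  have hsum1 : (fun z₁ : X₁ × Y₁ => ∑ z₂ : X₂ × Y₂, μ' (z₁, z₂))
      = fun q : X₁ × Y₁ => (PDist.fstM Q).prob q.1 * (PDist.fstM R).prob q.2 := by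
    funext q
    show ∑ z₂ : X₂ × Y₂, Q.prob (q.1, z₂.1) * R.prob (q.2, z₂.2) = _
    rw [Fintype.sum_prod_type]
    simp_rw [← Finset.mul_sum]
    rw [← Finset.sum_mul]
    rfl
  have hsum2 : (fun z₂ : X₂ × Y₂ => ∑ z₁ : X₁ × Y₁, μ' (z₁, z₂))
      = fun q : X₂ × Y₂ => (PDist.sndM Q).prob q.1 * (PDist.sndM R).prob q.2 := by
    funext q
    show ∑ z₁ : X₁ × Y₁, Q.prob (z₁.1, q.1) * R.prob (z₁.2, q.2) = _
    rw [Fintype.sum_prod_type]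
    simp_rw [← Finset.mul_sum]
    rw [← Finset.sum_mul]
    rfl
  have hkey := cDKL_superadd μ' A B hμ'0 hμ'1
  rw [hsum1, hsum2] at hkey
  have hcomp : cDKL μ' (fun z => A z.1 * B z.2)
      = cDKL (fun p : (X₁ × X₂) × (Y₁ × Y₂) => Q.prob p.1 * R.prob p.2)
        (fun p : (X₁ × X₂) × (Y₁ × Y₂) => P.prob p.1 * W.prob p.1 p.2) := by
    rw [← cDKL_comp_equiv (Equiv.prodProdProdComm X₁ Y₁ X₂ Y₂)
      (fun p : (X₁ × X₂) × (Y₁ × Y₂) => Q.prob p.1 * R.prob p.2)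
      (fun p : (X₁ × X₂) × (Y₁ × Y₂) => P.prob p.1 * W.prob p.1 p.2)]
    congr 1
    funext z
    obtain ⟨⟨x₁, y₁⟩, ⟨x₂, y₂⟩⟩ := z
    show P₁.prob x₁ * W₁.prob x₁ y₁ * (P₂.prob x₂ * W₂.prob x₂ y₂)
      = P₁.prob x₁ * P₂.prob x₂ * W.prob (x₁, x₂) (y₁, y₂)
    rw [hW]
    ring
  rw [hcomp] at hkey
  refine le_trans (add_le_add ?_ ?_) hkey
  · exact iInf_le_of_le (PDist.fstM Q) (iInf_le _ (PDist.fstM R))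
  · exact iInf_le_of_le (PDist.sndM Q) (iInf_le _ (PDist.sndM R))

end
end

section
/- Partition-function formula for the classical channel tumula information (first formula of the Corollary on tumula information of classical channels, under full support): Let X and Y be nonempty finite types and W a classical channel from X to Y with W x y > 0 for all x, y. Then T(W) = ⨆ over probability distributions P on X of ⨅ over probability distributions Q on X of (D(Q‖P) − Real.log Z(Q)), where Z(Q) := ∑ y, Real.exp (∑ x, Q x · Real.log (W x y)), and the inner expression is understood in [0,+∞] (it equals +∞ whenever D(Q‖P) = +∞). -/
open scoped BigOperators

noncomputable section

/-!
For fixed `P` and `Q` absolutely continuous with respect to `P`, the divergence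
`D(Q × R ‖ W∘P)` splits as `D(Q‖P) + ∑ R log R - ∑_y R y f_Q y` with
`f_Q y = ∑_x Q x log W x y`. By the Gibbs variational principle the infimum over `R` of the
last two terms is `-log Z(Q)`, attained at `R ∝ exp f_Q`, since their difference from
`-log Z(Q)` is `D(R ‖ exp f_Q / Z(Q)) ≥ 0`. If `Q` is not absolutely continuous with respect
to `P`, neither is any `Q × R` with respect to `W∘P`, and both sides are `+∞`.
-/

open Real Finset

theorem Real.sub_le_mul_log_div {r g : ℝ} (hr : 0 ≤ r) (hg : 0 < g) :
    r - g ≤ r * log (r / g) := by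
  have h := mul_le_mul_of_nonneg_left (self_sub_one_le_mul_log (div_nonneg hr hg.le)) hg.le
  field_simp at h
  linarith

theorem Real.sum_exp_pos {Y : Type*} [Fintype Y] [Nonempty Y] (f : Y → ℝ) :
    0 < ∑ y, exp (f y) :=
  sum_pos (fun y _ => exp_pos (f y)) univ_nonempty

section cDKL

variable {X : Type*} [Fintype X] {P Q : X → ℝ}

theorem cDKL_of_forall (h : ∀ x, Q x = 0 → P x = 0) :
    cDKL P Q = ((∑ x, P x * log (P x / Q x) : ℝ) : EReal) := by
  classical
  rw [cDKL, if_pos h]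
  congr 1
  refine sum_congr rfl fun x _ => ?_
  split_ifs with hP <;> simp [hP]

theorem cDKL_of_not_forall (h : ¬ ∀ x, Q x = 0 → P x = 0) : cDKL P Q = ⊤ := by
  classical
  rw [cDKL, if_neg h]

end cDKL

namespace PDist

variable {Y : Type*} [Fintype Y]

theorem exists_prob_ne_zero (R : PDist Y) : ∃ y, R.prob y ≠ 0 := by
  by_contra! h
  simpa [h] using R.sum_one

theorem sum_mul_log_div_nonneg (R G : PDist Y) (hG : ∀ y, 0 < G.prob y) :
    0 ≤ ∑ y, R.prob y * log (R.prob y / G.prob y) :=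
  calc (0 : ℝ) = ∑ y, (R.prob y - G.prob y) := by simp [sum_sub_distrib, R.sum_one, G.sum_one]
    _ ≤ _ := sum_le_sum fun y _ => sub_le_mul_log_div (R.nonneg y) (hG y)

variable [Nonempty Y]

def gibbs (f : Y → ℝ) : PDist Y where
  prob y := exp (f y) / ∑ y', exp (f y')
  nonneg y := by positivity
  sum_one := by rw [← sum_div, div_self (sum_exp_pos f).ne']

theorem gibbs_pos (f : Y → ℝ) (y : Y) : 0 < (gibbs f).prob y :=
  div_pos (exp_pos _) (sum_exp_pos f)

theorem log_gibbs (f : Y → ℝ) (y : Y) :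
    log ((gibbs f).prob y) = f y - log (∑ y', exp (f y')) := by
  rw [gibbs, log_div (exp_ne_zero _) (sum_exp_pos f).ne', log_exp]

theorem sum_mul_log_sub_sum_mul_eq (f : Y → ℝ) (R : PDist Y) :
    ∑ y, R.prob y * log (R.prob y) - ∑ y, R.prob y * f y
      = ∑ y, R.prob y * log (R.prob y / (gibbs f).prob y) - log (∑ y, exp (f y)) := by
  have hterm : ∀ y, R.prob y * log (R.prob y / (gibbs f).prob y)
      = R.prob y * log (R.prob y) - R.prob y * f y + R.prob y * log (∑ y, exp (f y)) := by
    intro y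
    rcases eq_or_ne (R.prob y) 0 with hR | hR
    · simp [hR]
    rw [log_div hR (gibbs_pos f y).ne', log_gibbs]
    ring
  simp only [hterm, sum_add_distrib, sum_sub_distrib, ← sum_mul, R.sum_one]
  ring

theorem isLeast_sum_mul_log_sub_sum_mul (f : Y → ℝ) :
    IsLeast (Set.range fun R : PDist Y => ∑ y, R.prob y * log (R.prob y) - ∑ y, R.prob y * f y)
      (-log (∑ y, exp (f y))) := by
  refine ⟨⟨gibbs f, ?_⟩, ?_⟩
  · simp [sum_mul_log_sub_sum_mul_eq f, div_self (gibbs_pos f _).ne']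
  · rintro _ ⟨R, rfl⟩
    dsimp only
    rw [sum_mul_log_sub_sum_mul_eq f]
    linarith [sum_mul_log_div_nonneg R (gibbs f) (gibbs_pos f)]

end PDist

section ProductDivergence

variable {X Y : Type*} [Fintype X] [Fintype Y]

theorem sum_prod_mul_log_div_eq (Q : PDist X) (R : PDist Y) {P : X → ℝ} {W : X → Y → ℝ}
    (hQP : ∀ x, P x = 0 → Q.prob x = 0) (hW : ∀ x y, W x y ≠ 0) :
    ∑ p : X × Y,
        Q.prob p.1 * R.prob p.2 * log (Q.prob p.1 * R.prob p.2 / (P p.1 * W p.1 p.2))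
      = ∑ x, Q.prob x * log (Q.prob x / P x)
        + (∑ y, R.prob y * log (R.prob y) - ∑ y, R.prob y * ∑ x, Q.prob x * log (W x y)) := by
  have hterm : ∀ x y, Q.prob x * R.prob y * log (Q.prob x * R.prob y / (P x * W x y))
      = R.prob y * (Q.prob x * log (Q.prob x / P x)) + Q.prob x * (R.prob y * log (R.prob y))
        - R.prob y * (Q.prob x * log (W x y)) := by
    intro x y
    rcases eq_or_ne (Q.prob x) 0 with hQ | hQ
    · simp [hQ]
    rcases eq_or_ne (R.prob y) 0 with hR | hR
    · simp [hR]
    have hP : P x ≠ 0 := mt (hQP x) hQ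
    rw [log_div (mul_ne_zero hQ hR) (mul_ne_zero hP (hW x y)), log_mul hQ hR,
      log_mul hP (hW x y), log_div hQ hP]
    ring
  rw [Fintype.sum_prod_type, sum_comm]
  simp only [hterm, sum_add_distrib, sum_sub_distrib, ← mul_sum, ← sum_mul, Q.sum_one,
    R.sum_one, one_mul]
  ring

theorem cDKL_prod_of_forall (Q : PDist X) (R : PDist Y) {P : X → ℝ} {W : X → Y → ℝ}
    (hQP : ∀ x, P x = 0 → Q.prob x = 0) (hW : ∀ x y, W x y ≠ 0) :
    cDKL (fun p : X × Y => Q.prob p.1 * R.prob p.2) (fun p => P p.1 * W p.1 p.2)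
      = ((∑ x, Q.prob x * log (Q.prob x / P x) + (∑ y, R.prob y * log (R.prob y)
          - ∑ y, R.prob y * ∑ x, Q.prob x * log (W x y)) : ℝ) : EReal) := by
  have hac (p : X × Y) (hp : P p.1 * W p.1 p.2 = 0) : Q.prob p.1 * R.prob p.2 = 0 := by
    simp [hQP p.1 ((mul_eq_zero.1 hp).resolve_right (hW p.1 p.2))]
  rw [cDKL_of_forall hac, sum_prod_mul_log_div_eq Q R hQP hW]

theorem cDKL_prod_of_not_forall (Q : PDist X) (R : PDist Y) {P : X → ℝ} (W : X → Y → ℝ)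
    (hQP : ¬ ∀ x, P x = 0 → Q.prob x = 0) :
    cDKL (fun p : X × Y => Q.prob p.1 * R.prob p.2) (fun p => P p.1 * W p.1 p.2) = ⊤ := by
  obtain ⟨x, hPx, hQx⟩ : ∃ x, P x = 0 ∧ Q.prob x ≠ 0 := by simpa using hQP
  obtain ⟨y, hRy⟩ := R.exists_prob_ne_zero
  exact cDKL_of_not_forall fun h => mul_ne_zero hQx hRy (h (x, y) (by simp [hPx]))

theorem iInf_cDKL_prod_eq [Nonempty Y] (Q : PDist X) (P : X → ℝ) {W : X → Y → ℝ}
    (hW : ∀ x y, W x y ≠ 0) :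
    ⨅ R : PDist Y, cDKL (fun p : X × Y => Q.prob p.1 * R.prob p.2) (fun p => P p.1 * W p.1 p.2)
      = cDKL Q.prob P - ((log (∑ y, exp (∑ x, Q.prob x * log (W x y))) : ℝ) : EReal) := by
  by_cases hQP : ∀ x, P x = 0 → Q.prob x = 0
  · set d := ∑ x, Q.prob x * log (Q.prob x / P x)
    have hmono : Monotone fun t : ℝ => ((d + t : ℝ) : EReal) :=
      fun a b hab => EReal.coe_le_coe_iff.2 (add_le_add_right hab d)
    have hleast := hmono.map_isLeast
      (PDist.isLeast_sum_mul_log_sub_sum_mul fun y => ∑ x, Q.prob x * log (W x y))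
    rw [← Set.range_comp] at hleast
    rw [iInf_congr fun R => cDKL_prod_of_forall Q R hQP hW, cDKL_of_forall hQP, ← EReal.coe_sub,
      sub_eq_add_neg]
    exact hleast.isGLB.iInf_eq
  · simp [cDKL_prod_of_not_forall Q _ W hQP, cDKL_of_not_forall hQP]

end ProductDivergence

theorem channel_tumula_partition_function_general {X Y : Type*}
    [Fintype X] [Fintype Y] [Nonempty Y]
    (W : Channel X Y) (hW : ∀ x y, 0 < W.prob x y) :
    chT W = ⨆ P : PDist X, ⨅ Q : PDist X,
      (cDKL Q.prob P.prob
        - ((Real.log (∑ y : Y, Real.exp (∑ x : X, Q.prob x * Real.log (W.prob x y))) : ℝ)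
            : EReal)) :=
  iSup_congr fun P => iInf_congr fun Q => iInf_cDKL_prod_eq Q P.prob fun x y => (hW x y).ne'

/-- Partition-function formula for the classical channel tumula information
(first formula of the Corollary, under full support). -/
theorem channel_tumula_partition_function {X Y : Type*}
    [Fintype X] [Nonempty X] [Fintype Y] [Nonempty Y]
    (W : Channel X Y) (hW : ∀ x y, 0 < W.prob x y) :
    chT W = ⨆ P : PDist X, ⨅ Q : PDist X,
      (cDKL Q.prob P.prob
        - ((Real.log (∑ y : Y, Real.exp (∑ x : X, Q.prob x * Real.log (W.prob x y))) : ℝ)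
            : EReal)) :=
  channel_tumula_partition_function_general W hW

end
end

section
/- Tumula information of the classical identity channel (Proposition 11): Let X be a nonempty finite type and let I be the identity channel from X to X, I x y := if x = y then 1 else 0. Then T(I) = Real.log (Fintype.card X). -/
open scoped BigOperators

noncomputable section

-- Auxiliary: if `Q` and `R` are point masses at `x0`, the relevant sum collapses.
open Classical in
lemma sum_point_mass {X : Type*} [Fintype X] (Q R : X → ℝ) (x0 : X)
    (hQ1 : Q x0 = 1) (hQ0 : ∀ x, x ≠ x0 → Q x = 0)
    (hR1 : R x0 = 1) (hR0 : ∀ x, x ≠ x0 → R x = 0)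
    (J : X × X → ℝ) :
    (∑ p : X × X, if Q p.1 * R p.2 = 0 then (0:ℝ)
      else Q p.1 * R p.2 * Real.log (Q p.1 * R p.2 / J p))
      = Real.log (1 / J (x0, x0)) := by
  have hfun : ∀ p : X × X,
      (if Q p.1 * R p.2 = 0 then (0:ℝ)
        else Q p.1 * R p.2 * Real.log (Q p.1 * R p.2 / J p))
      = if p = (x0, x0) then Real.log (1 / J (x0, x0)) else 0 := by
    intro p
    by_cases h1 : p.1 = x0
    · by_cases h2 : p.2 = x0
      · have hp : p = (x0, x0) := Prod.ext h1 h2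
        subst hp
        simp [hQ1, hR1]
      · have hz : R p.2 = 0 := hR0 _ h2
        have hp : p ≠ (x0, x0) := by
          intro hp; exact h2 (by rw [hp])
        simp [hz, hp]
    · have hz : Q p.1 = 0 := hQ0 _ h1
      have hp : p ≠ (x0, x0) := by
        intro hp; exact h1 (by rw [hp])
      simp [hz, hp]
  rw [Finset.sum_congr rfl (fun p _ => hfun p)]
  simp

/-- A point-mass distribution. -/
def pointD {X : Type*} [Fintype X] [DecidableEq X] (x0 : X) : PDist X where
  prob := fun x => if x = x0 then 1 else 0
  nonneg := fun x => by by_cases h : x = x0 <;> simp [h]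
  sum_one := by simp

/-- Tumula information of the classical identity channel (Proposition 11). -/
theorem tumula_identity_channel {X : Type*} [Fintype X] [DecidableEq X] [Nonempty X]
    (I : Channel X X) (hI : ∀ x y, I.prob x y = if x = y then 1 else 0) :
    chT I = ((Real.log (Fintype.card X) : ℝ) : EReal) := by
  have hnpos : 0 < Fintype.card X := Fintype.card_pos
  have hnR : (0:ℝ) < (Fintype.card X : ℝ) := by exact_mod_cast hnpos
  apply le_antisymm
  · -- upper bound: chT I ≤ log n
    refine iSup_le fun P => ?_
    obtain ⟨x0, hx0⟩ : ∃ x, ((Fintype.card X : ℝ))⁻¹ ≤ P.prob x := by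
      by_contra h
      push_neg at h
      have hlt := Finset.sum_lt_sum_of_nonempty (Finset.univ_nonempty)
        (fun x _ => h x)
      rw [P.sum_one, Finset.sum_const, Finset.card_univ, nsmul_eq_mul,
        mul_inv_cancel₀ hnR.ne'] at hlt
      exact lt_irrefl _ hlt
    have hP0 : 0 < P.prob x0 := lt_of_lt_of_le (inv_pos.mpr hnR) hx0
    refine le_trans (iInf₂_le (pointD x0) (pointD x0)) ?_
    have hc : ∀ p : X × X, P.prob p.1 * I.prob p.1 p.2 = 0 →
        (pointD x0).prob p.1 * (pointD x0).prob p.2 = 0 := by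
      intro p hp
      by_contra hne
      have h1 : p.1 = x0 := by
        by_contra h1; exact hne (by simp [pointD, h1])
      have h2 : p.2 = x0 := by
        by_contra h2; exact hne (by simp [pointD, h2])
      rw [h1, h2, hI, if_pos rfl, mul_one] at hp
      exact hP0.ne' hp
    rw [cDKL, if_pos hc]
    rw [sum_point_mass (pointD x0).prob (pointD x0).prob x0 (by simp [pointD])
      (fun x hx => by simp [pointD, hx]) (by simp [pointD])
      (fun x hx => by simp [pointD, hx])]
    refine EReal.coe_le_coe_iff.mpr ?_
    rw [hI, if_pos rfl, mul_one, one_div, Real.log_inv]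
    have hlog := Real.log_le_log (inv_pos.mpr hnR) hx0
    rw [Real.log_inv] at hlog
    linarith
  · -- lower bound via uniform distribution
    have hU : ∑ _x : X, ((Fintype.card X : ℝ))⁻¹ = 1 := by
      rw [Finset.sum_const, Finset.card_univ, nsmul_eq_mul, mul_inv_cancel₀ hnR.ne']
    refine le_trans ?_ (le_iSup _ (⟨fun _ => ((Fintype.card X : ℝ))⁻¹,
      fun _ => (inv_pos.mpr hnR).le, hU⟩ : PDist X))
    refine le_iInf fun Q => le_iInf fun R => ?_
    rw [cDKL]
    split_ifs with hc
    · -- the factors must be point masses at a common point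
      have hoff : ∀ x y : X, x ≠ y → Q.prob x * R.prob y = 0 := by
        intro x y hxy
        exact hc (x, y) (by simp [hI, hxy])
      obtain ⟨x0, hx0⟩ : ∃ x, Q.prob x ≠ 0 := by
        by_contra h
        push_neg at h
        have h1 := Q.sum_one
        rw [Finset.sum_eq_zero (fun x _ => h x)] at h1
        norm_num at h1
      have hR0 : ∀ y, y ≠ x0 → R.prob y = 0 := by
        intro y hy
        rcases mul_eq_zero.mp (hoff x0 y (Ne.symm hy)) with h | h
        · exact absurd h hx0
        · exact h
      have hR1 : R.prob x0 = 1 := by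
        have h1 := R.sum_one
        rw [Finset.sum_eq_single x0 (fun y _ hy => hR0 y hy)
          (fun h => absurd (Finset.mem_univ x0) h)] at h1
        exact h1
      have hQ0 : ∀ x, x ≠ x0 → Q.prob x = 0 := by
        intro x hx
        rcases mul_eq_zero.mp (hoff x x0 hx) with h | h
        · exact h
        · rw [hR1] at h; norm_num at h
      have hQ1 : Q.prob x0 = 1 := by
        have h1 := Q.sum_one
        rw [Finset.sum_eq_single x0 (fun y _ hy => hQ0 y hy)
          (fun h => absurd (Finset.mem_univ x0) h)] at h1
        exact h1
      rw [sum_point_mass Q.prob R.prob x0 hQ1 hQ0 hR1 hR0]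
      refine EReal.coe_le_coe_iff.mpr ?_
      simp [hI, one_div]
    · exact le_top

end
end
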